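/- Higher-order barrier recursion preserves nonnegativity: let α₁, α₂ : R → R be locally Lipschitz extended class-K functions, and let ψ⁰ : [0, T) → R be C². Define ψ¹(t) = (ψ⁰)'(t) + α₁(ψ⁰(t)). If ψ⁰(0) ≥ 0, ψ¹(0) ≥ 0, and (ψ¹)'(t) ≥ -α₂(ψ¹(t)) for all t ∈ [0, T), then ψ⁰(t) ≥ 0 and ψ¹(t) ≥ 0 for all t ∈ [0, T). -/

import Mathlib

/-!
If `ψ¹` ever became negative it would have to cross from a last nonnegative time into a stretch
where it is negative; there `(ψ¹)' ≥ -α₂(ψ¹) > 0`, so `ψ¹` increases along that stretch, which is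
absurd. Once `ψ¹ ≥ 0`, the same argument applies to `ψ⁰`, since `(ψ⁰)' = ψ¹ - α₁(ψ⁰) ≥ -α₁(ψ⁰)`.
-/

open Set

theorem nonneg_of_deriv_pos_of_neg {f : ℝ → ℝ} {a b : ℝ} (hab : a ≤ b)
    (hf : ContinuousOn f (Icc a b)) (ha : 0 ≤ f a)
    (hderiv : ∀ t ∈ Ioo a b, f t < 0 → 0 < deriv f t) : 0 ≤ f b := by
  by_contra! hb
  set S := {t ∈ Icc a b | 0 ≤ f t}
  have hS : IsCompact S :=
    isCompact_Icc.of_isClosed_subset (hf.preimage_isClosed_of_isClosed isClosed_Icc isClosed_Ici)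
      fun _ ht => ht.1
  have ht₀ : sSup S ∈ S := hS.sSup_mem ⟨a, ⟨le_rfl, hab⟩, ha⟩
  set t₀ := sSup S
  obtain ⟨⟨hat₀, ht₀b⟩, hft₀⟩ := ht₀
  have ht₀b' : t₀ < b := ht₀b.lt_of_ne fun h => by rw [h] at hft₀; linarith
  have hneg : ∀ t ∈ Ioo t₀ b, f t < 0 := fun t ht => by
    by_contra! hft
    exact (le_csSup hS.bddAbove ⟨⟨hat₀.trans ht.1.le, ht.2.le⟩, hft⟩).not_gt ht.1
  have hmono : StrictMonoOn f (Icc t₀ b) := by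
    refine strictMonoOn_of_deriv_pos (convex_Icc t₀ b) (hf.mono (Icc_subset_Icc_left hat₀)) ?_
    rw [interior_Icc]
    exact fun t ht => hderiv t ⟨hat₀.trans_lt ht.1, ht.2⟩ (hneg t ht)
  linarith [hmono (left_mem_Icc.2 ht₀b) (right_mem_Icc.2 ht₀b) ht₀b']

theorem nonneg_on_Ico_of_neg_le_deriv {α g : ℝ → ℝ} {a b : ℝ} (hα : StrictMono α)
    (hα0 : α 0 = 0) (hg : ContinuousOn g (Ico a b)) (ha : 0 ≤ g a)
    (hderiv : ∀ t ∈ Ioo a b, -α (g t) ≤ deriv g t) : ∀ t ∈ Ico a b, 0 ≤ g t := by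
  intro t ht
  refine nonneg_of_deriv_pos_of_neg ht.1 (hg.mono (Icc_subset_Ico_right ht.2)) ha ?_
  intro s hs hgs
  have : α (g s) < 0 := hα0 ▸ hα hgs
  linarith [hderiv s ⟨hs.1, hs.2.trans ht.2⟩]

theorem stmt_3_general (T : ℝ) (α₁ α₂ ψ0 ψ1 : ℝ → ℝ)
    (hα₁cont : Continuous α₁) (hα₁mono : StrictMono α₁) (hα₁0 : α₁ 0 = 0)
    (hα₂mono : StrictMono α₂) (hα₂0 : α₂ 0 = 0)
    (hC2 : ContDiffOn ℝ 2 ψ0 (Set.Ico 0 T))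
    (hψ1 : ∀ t ∈ Set.Ico (0 : ℝ) T,
      ψ1 t = derivWithin ψ0 (Set.Ico 0 T) t + α₁ (ψ0 t))
    (h00 : 0 ≤ ψ0 0) (h10 : 0 ≤ ψ1 0)
    (hderiv : ∀ t ∈ Set.Ico (0 : ℝ) T,
      -α₂ (ψ1 t) ≤ derivWithin ψ1 (Set.Ico 0 T) t) :
    ∀ t ∈ Set.Ico (0 : ℝ) T, 0 ≤ ψ0 t ∧ 0 ≤ ψ1 t := by
  have hderivWithin_eq (f : ℝ → ℝ) (t : ℝ) (ht : t ∈ Ioo 0 T) :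
      derivWithin f (Ico 0 T) t = deriv f t :=
    derivWithin_of_mem_nhds (Ico_mem_nhds ht.1 ht.2)
  have hψ1cont : ContinuousOn ψ1 (Ico 0 T) :=
    ((hC2.continuousOn_derivWithin (uniqueDiffOn_Ico 0 T) (by norm_num)).add
      (hα₁cont.comp_continuousOn hC2.continuousOn)).congr hψ1
  have hψ1nn : ∀ t ∈ Ico 0 T, 0 ≤ ψ1 t :=
    nonneg_on_Ico_of_neg_le_deriv hα₂mono hα₂0 hψ1cont h10 fun t ht =>
      hderivWithin_eq ψ1 t ht ▸ hderiv t (Ioo_subset_Ico_self ht)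
  have hψ0nn : ∀ t ∈ Ico 0 T, 0 ≤ ψ0 t :=
    nonneg_on_Ico_of_neg_le_deriv hα₁mono hα₁0 hC2.continuousOn h00 fun t ht => by
      rw [← hderivWithin_eq ψ0 t ht]
      linarith [hψ1 t (Ioo_subset_Ico_self ht), hψ1nn t (Ioo_subset_Ico_self ht)]
  exact fun t ht => ⟨hψ0nn t ht, hψ1nn t ht⟩

/-- Higher-order barrier recursion preserves nonnegativity (second-order case):
with `ψ¹ = (ψ⁰)' + α₁(ψ⁰)`, if `ψ⁰(0) ≥ 0`, `ψ¹(0) ≥ 0`, and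
`(ψ¹)' ≥ -α₂(ψ¹)` on `[0,T)`, then `ψ⁰ ≥ 0` and `ψ¹ ≥ 0` on `[0,T)`. -/
theorem stmt_3 (T : ℝ) (α₁ α₂ ψ0 ψ1 : ℝ → ℝ)
    (hα₁cont : Continuous α₁) (hα₁mono : StrictMono α₁) (hα₁0 : α₁ 0 = 0)
    (hα₁lip : LocallyLipschitz α₁)
    (hα₂cont : Continuous α₂) (hα₂mono : StrictMono α₂) (hα₂0 : α₂ 0 = 0)
    (hα₂lip : LocallyLipschitz α₂)
    (hC2 : ContDiffOn ℝ 2 ψ0 (Set.Ico 0 T))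
    (hψ1 : ∀ t ∈ Set.Ico (0 : ℝ) T,
      ψ1 t = derivWithin ψ0 (Set.Ico 0 T) t + α₁ (ψ0 t))
    (h00 : 0 ≤ ψ0 0) (h10 : 0 ≤ ψ1 0)
    (hderiv : ∀ t ∈ Set.Ico (0 : ℝ) T,
      -α₂ (ψ1 t) ≤ derivWithin ψ1 (Set.Ico 0 T) t) :
    ∀ t ∈ Set.Ico (0 : ℝ) T, 0 ≤ ψ0 t ∧ 0 ≤ ψ1 t :=
  stmt_3_general T α₁ α₂ ψ0 ψ1 hα₁cont hα₁mono hα₁0 hα₂mono hα₂0 hC2 hψ1 h00 h10 hderiv
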